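/- arXiv:2304.01037 — 5 statements merged into one kernel-verified Lean document; each statement's English description precedes it below -/
import Mathlib

section
/- Let k ≥ 2 and m ≥ 1, and let n = k^{m−1}, so that kn = k^m. Then the shuffle group G_{k,k^m} is isomorphic as an abstract group to the wreath product S_k ≀ C_m, i.e., to the semidirect product (∏_{i ∈ Z/mZ} Sym({0,...,k−1})) ⋊ C_m in which a generator of the cyclic group C_m of order m acts by cyclically shifting the m coordinates of the direct product. -/
/-- The standard shuffle `σ` on a deck of `k * n` cards whose positions are labelled by
`Fin (k * n)`: it sends position `i + j * n` (for `i ∈ {0,…,n-1}`, `j ∈ {0,…,k-1}`)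
to position `i * k + j`. -/
def stdShuffle (k n : ℕ) : Equiv.Perm (Fin (k * n)) :=
  finProdFinEquiv.symm.trans ((Equiv.prodComm (Fin k) (Fin n)).trans
    (finProdFinEquiv.trans (finCongr (Nat.mul_comm n k))))

/-- The permutation `ρ_τ` of the `k * n` cards induced by a permutation `τ` of the `k`
piles: it sends position `i + j * n` (for `i ∈ {0,…,n-1}`, `j ∈ {0,…,k-1}`) to
position `i + τ(j) * n`. -/
def pilePerm (k n : ℕ) (τ : Equiv.Perm (Fin k)) : Equiv.Perm (Fin (k * n)) :=
  finProdFinEquiv.symm.trans ((Equiv.prodCongr τ (Equiv.refl (Fin n))).trans finProdFinEquiv)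

/-- The shuffle group `G_{k,kn}`, the subgroup of `Sym({0,…,kn-1})` generated by `σ`
together with all `ρ_τ` (equivalently, by all products `ρ_τ · σ`). -/
def shuffleGroup (k n : ℕ) : Subgroup (Equiv.Perm (Fin (k * n))) :=
  Subgroup.closure ({stdShuffle k n} ∪ Set.range (pilePerm k n))

/-- The action of a permutation of `α` on tuples `α → G` by permuting coordinates. -/
def coordAct (α : Type*) (G : Type*) [Group G] : Equiv.Perm α →* MulAut (α → G) where
  toFun g := MulEquiv.arrowCongr g (MulEquiv.refl G)
  map_one' := by ext f i; rfl
  map_mul' g h := by ext f i; rfl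

/-- The translation homomorphism from the cyclic group `C_m` of order `m` (realised as
`Multiplicative (ZMod m)`) into the permutations of `ZMod m`. -/
def translationPerm (m : ℕ) : Multiplicative (ZMod m) →* Equiv.Perm (ZMod m) where
  toFun z := Equiv.addLeft z.toAdd
  map_one' := by ext x; simp
  map_mul' z w := by ext x; simp [add_assoc]

/-- The action of the cyclic group `C_m` on `m`-tuples of elements of `G` by cyclically
shifting the `m` coordinates. -/
def cyclicShiftAct (m : ℕ) (G : Type*) [Group G] :
    Multiplicative (ZMod m) →* MulAut (ZMod m → G) :=
  (coordAct (ZMod m) G).comp (translationPerm m)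

/-!
Read a position `p < k ^ m` in base `k`, indexing its `m` digits by `ZMod m` (digit `i` has
weight `k ^ i`). For `p = i + j * n` with `i < n = k ^ (m - 1)` the pile number `j` is the top
digit (index `-1`), and `σ p = i * k + j` has the digits of `p` cyclically shifted up by one. So,
transported along this bijection, `σ` becomes the cyclic shift of coordinates and `ρ_τ` applies
`τ` to coordinate `-1`: these are the images of the generators `inr 1` and `inl (τ at -1)` of
`S_k ≀ C_m` under its imprimitive action on `ZMod m → Fin k`. This action is faithful since
`k ≥ 2`, and the two kinds of elements generate the wreath product because conjugating by the
shift moves `τ` to any coordinate.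
-/

open Equiv SemidirectProduct

theorem nonempty_closure_mulEquiv_of_image_eq {G H K : Type*} [Group G] [Group H] [Group K]
    (e : K ≃* H) {φ : G →* H} (hφ : Function.Injective φ) {S : Set G}
    (hS : Subgroup.closure S = ⊤) {T : Set K} (hT : e '' T = φ '' S) :
    Nonempty (Subgroup.closure T ≃* G) := by
  have hmap : (Subgroup.closure T).map e.toMonoidHom = φ.range := by
    rw [MonoidHom.map_closure, MonoidHom.range_eq_map, ← hS, MonoidHom.map_closure]
    exact congrArg Subgroup.closure hT
  exact ⟨(e.subgroupMap _).trans
    ((MulEquiv.subgroupCongr hmap).trans (MonoidHom.ofInjective hφ).symm)⟩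

def Equiv.Perm.piCongrRightHom (α β : Type*) : (α → Perm β) →* Perm (α → β) where
  toFun := Equiv.piCongrRight
  map_one' := rfl
  map_mul' _ _ := rfl

def Equiv.Perm.arrowCongrHom (α β : Type*) : Perm α →* Perm (α → β) where
  toFun g := g.arrowCongr (Equiv.refl β)
  map_one' := rfl
  map_mul' _ _ := rfl

section WreathProduct

variable (β : Type*) (m : ℕ)

noncomputable def wreathToPerm :
    (ZMod m → Perm β) ⋊[cyclicShiftAct m (Perm β)] Multiplicative (ZMod m) →*
      Perm (ZMod m → β) :=
  lift (Perm.piCongrRightHom (ZMod m) β)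
    ((Perm.arrowCongrHom (ZMod m) β).comp (translationPerm m)) fun _ => by
      ext τs : 1
      simp only [MonoidHom.comp_apply, MulEquiv.coe_toMonoidHom, MulAut.conj_apply,
        eq_mul_inv_iff_mul_eq]
      ext f i
      rfl

variable {β m}

theorem wreathToPerm_apply
    (x : (ZMod m → Perm β) ⋊[cyclicShiftAct m (Perm β)] Multiplicative (ZMod m))
    (f : ZMod m → β) (i : ZMod m) :
    wreathToPerm β m x f i = x.left i (f (-x.right.toAdd + i)) :=
  rfl

theorem wreathToPerm_injective [Nontrivial β] : Function.Injective (wreathToPerm β m) := by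
  rw [injective_iff_map_eq_one]
  intro x hx
  have fix (f : ZMod m → β) (i : ZMod m) : x.left i (f (-x.right.toAdd + i)) = f i := by
    rw [← wreathToPerm_apply, hx]; rfl
  obtain ⟨b, c, hbc⟩ := exists_pair_ne β
  have hright : x.right = 1 := by
    by_contra h
    have h0 : -x.right.toAdd + 0 ≠ 0 := by simpa using h
    have hb := fix (Function.update (fun _ => c) 0 b) 0
    rw [Function.update_of_ne h0, Function.update_self] at hb
    exact hbc (hb.symm.trans (fix (fun _ => c) 0))
  refine SemidirectProduct.ext (funext fun i => Equiv.ext fun v => ?_) hright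
  simpa [hright] using fix (fun _ => v) i

theorem cyclicShiftAct_mulSingle (G : Type*) [Group G] (z i : ZMod m) (g : G) :
    cyclicShiftAct m G (Multiplicative.ofAdd z) (Pi.mulSingle i g : ZMod m → G) =
      (Pi.mulSingle (i + z) g : ZMod m → G) := by
  ext l
  change (Pi.mulSingle i g : ZMod m → G) (-z + l) = _
  simp only [Pi.mulSingle_apply, neg_add_eq_iff_eq_add, add_comm z]

theorem closure_inr_ofAdd_one_union_range_inl_mulSingle (G : Type*) [Group G] [NeZero m]
    (j : ZMod m) :
    Subgroup.closure
        ({inr (Multiplicative.ofAdd 1)} ∪ Set.range fun g : G => inl (Pi.mulSingle j g)) =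
      (⊤ : Subgroup ((ZMod m → G) ⋊[cyclicShiftAct m G] Multiplicative (ZMod m))) := by
  set H := Subgroup.closure ({inr (Multiplicative.ofAdd 1)} ∪
    Set.range fun g : G => inl (φ := cyclicShiftAct m G) (Pi.mulSingle j g))
  have hinr (z : Multiplicative (ZMod m)) : inr (φ := cyclicShiftAct m G) z ∈ H := by
    have hz : z = Multiplicative.ofAdd (1 : ZMod m) ^ (ZMod.cast z.toAdd : ℤ) := by
      rw [← ofAdd_zsmul, zsmul_one, ZMod.intCast_zmod_cast]; rfl
    rw [hz, map_zpow]
    exact zpow_mem (Subgroup.subset_closure (Set.mem_union_left _ (Set.mem_singleton _))) _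
  have hinl (i : ZMod m) (g : G) : inl (φ := cyclicShiftAct m G) (Pi.mulSingle i g) ∈ H := by
    rw [← add_sub_cancel j i, ← cyclicShiftAct_mulSingle, inl_aut]
    exact mul_mem (mul_mem (hinr _) (Subgroup.subset_closure (Or.inr ⟨g, rfl⟩))) (hinr _)
  refine eq_top_iff.mpr fun x _ => ?_
  rw [← inl_left_mul_inr_right x]
  exact mul_mem (Subgroup.pi_mem_of_mulSingle_mem (H := H.comap inl) x.left fun i => hinl i _)
    (hinr _)

end WreathProduct

theorem Fin.snoc_apply_neg_one_add {M : ℕ} {α : Type*} (g : Fin M → α) (a : α)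
    (i : Fin (M + 1)) :
    (Fin.snoc g a : Fin (M + 1) → α) (-1 + i) = (Fin.cons a g : Fin (M + 1) → α) i := by
  simp only [Fin.snoc_eq_cons_rotate, finRotate_apply, neg_add_cancel_comm]

theorem Fin.snoc_apply_perm {M : ℕ} {α : Type*} (g : Fin M → α) (a : α) (τ : Perm α)
    (i : Fin (M + 1)) :
    (Fin.snoc g (τ a) : Fin (M + 1) → α) i =
      (Pi.mulSingle (Fin.last M) τ : Fin (M + 1) → Perm α) i
        ((Fin.snoc g a : Fin (M + 1) → α) i) := by
  induction i using Fin.lastCases with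
  | last => simp
  | cast l => simp [Fin.castSucc_ne_last]

theorem ZMod.finEquiv_symm_neg_one (M : ℕ) :
    (ZMod.finEquiv (M + 1)).symm (-1) = Fin.last M := by
  rw [map_neg, map_one]
  exact Fin.ext (by simp)

theorem finFunctionFinEquiv_cons_val {k M : ℕ} (a : Fin k) (g : Fin M → Fin k) :
    (finFunctionFinEquiv (Fin.cons a g : Fin (M + 1) → Fin k) : ℕ) =
      a + k * finFunctionFinEquiv g := by
  simp [Fin.sum_univ_succ, pow_succ', Finset.mul_sum, mul_left_comm]

theorem finFunctionFinEquiv_snoc_val {k M : ℕ} (a : Fin k) (g : Fin M → Fin k) :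
    (finFunctionFinEquiv (Fin.snoc g a : Fin (M + 1) → Fin k) : ℕ) =
      finFunctionFinEquiv g + k ^ M * a := by
  simp [Fin.sum_univ_castSucc, mul_comm]

theorem stdShuffle_finProdFinEquiv (k n : ℕ) (a : Fin k) (b : Fin n) :
    stdShuffle k n (finProdFinEquiv (a, b)) =
      finCongr (mul_comm n k) (finProdFinEquiv (b, a)) := by
  simp [stdShuffle]

theorem pilePerm_finProdFinEquiv (k n : ℕ) (τ : Perm (Fin k)) (a : Fin k) (b : Fin n) :
    pilePerm k n τ (finProdFinEquiv (a, b)) = finProdFinEquiv (τ a, b) := by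
  simp [pilePerm]

def digitEquiv (k M : ℕ) : Fin (k * k ^ M) ≃ (ZMod (M + 1) → Fin k) :=
  (finCongr (pow_succ' k M).symm).trans <| finFunctionFinEquiv.symm.trans <|
    (ZMod.finEquiv (M + 1)).toEquiv.arrowCongr (Equiv.refl (Fin k))

section Digits

variable {k M : ℕ}

theorem digitEquiv_apply (p : Fin (k * k ^ M)) :
    digitEquiv k M p =
      finFunctionFinEquiv.symm (finCongr (pow_succ' k M).symm p) ∘ (ZMod.finEquiv (M + 1)).symm :=
  rfl

theorem digitEquiv_finProdFinEquiv (a : Fin k) (x : Fin (k ^ M)) :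
    digitEquiv k M (finProdFinEquiv (a, x)) =
      Fin.snoc (α := fun _ => Fin k) (finFunctionFinEquiv.symm x) a ∘
        (ZMod.finEquiv (M + 1)).symm := by
  rw [digitEquiv_apply]
  congr 1
  rw [Equiv.symm_apply_eq]
  ext
  rw [finFunctionFinEquiv_snoc_val, Equiv.apply_symm_apply]
  simp

theorem digitEquiv_stdShuffle_finProdFinEquiv (a : Fin k) (x : Fin (k ^ M)) :
    digitEquiv k M (stdShuffle k (k ^ M) (finProdFinEquiv (a, x))) =
      Fin.cons (α := fun _ => Fin k) a (finFunctionFinEquiv.symm x) ∘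
        (ZMod.finEquiv (M + 1)).symm := by
  rw [digitEquiv_apply, stdShuffle_finProdFinEquiv]
  congr 1
  rw [Equiv.symm_apply_eq]
  ext
  rw [finFunctionFinEquiv_cons_val, Equiv.apply_symm_apply]
  simp

theorem permCongr_digitEquiv_stdShuffle :
    (digitEquiv k M).permCongr (stdShuffle k (k ^ M)) =
      wreathToPerm (Fin k) (M + 1) (inr (Multiplicative.ofAdd 1)) := by
  refine Equiv.ext fun f => ?_
  obtain ⟨p, rfl⟩ := (digitEquiv k M).surjective f
  obtain ⟨⟨a, x⟩, rfl⟩ := finProdFinEquiv.surjective p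
  rw [permCongr_apply, symm_apply_apply, digitEquiv_stdShuffle_finProdFinEquiv,
    digitEquiv_finProdFinEquiv]
  funext i
  simp only [wreathToPerm_apply, Function.comp_apply, left_inr, right_inr, toAdd_ofAdd,
    Pi.one_apply, Perm.one_apply, map_add, map_neg, map_one, Fin.snoc_apply_neg_one_add]

theorem permCongr_digitEquiv_pilePerm (τ : Perm (Fin k)) :
    (digitEquiv k M).permCongr (pilePerm k (k ^ M) τ) =
      wreathToPerm (Fin k) (M + 1) (inl (Pi.mulSingle (-1) τ)) := by
  refine Equiv.ext fun f => ?_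
  obtain ⟨p, rfl⟩ := (digitEquiv k M).surjective f
  obtain ⟨⟨a, x⟩, rfl⟩ := finProdFinEquiv.surjective p
  rw [permCongr_apply, symm_apply_apply, pilePerm_finProdFinEquiv, digitEquiv_finProdFinEquiv,
    digitEquiv_finProdFinEquiv]
  funext i
  obtain ⟨j, rfl⟩ := (ZMod.finEquiv (M + 1)).surjective i
  simp only [wreathToPerm_apply, Function.comp_apply, left_inl, right_inl, toAdd_one, neg_zero,
    zero_add, RingEquiv.symm_apply_apply]
  have hsingle : (Pi.mulSingle (-1) τ : ZMod (M + 1) → Perm (Fin k)) (ZMod.finEquiv (M + 1) j) =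
      (Pi.mulSingle (Fin.last M) τ : Fin (M + 1) → Perm (Fin k)) j := by
    rw [← ZMod.finEquiv_symm_neg_one]
    exact congrFun (Pi.mulSingle_comp_equiv (ZMod.finEquiv (M + 1)).toEquiv (-1) τ) j
  rw [hsingle, Fin.snoc_apply_perm]

end Digits

/-- If `kn = k^m` (with `k ≥ 2`, `m ≥ 1`), then the shuffle group `G_{k,k^m}` is
isomorphic as an abstract group to the wreath product `S_k ≀ C_m`, i.e. to the
semidirect product `(∏_{i ∈ Z/mZ} Sym({0,…,k-1})) ⋊ C_m` where a generator of the
cyclic group `C_m` of order `m` acts by cyclically shifting the `m` coordinates. -/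
theorem shuffleGroup_of_prime_power (k m n : ℕ) (hk : 2 ≤ k) (hm : 1 ≤ m)
    (hn : n = k ^ (m - 1)) :
    Nonempty ((shuffleGroup k n) ≃*
      SemidirectProduct (ZMod m → Equiv.Perm (Fin k)) (Multiplicative (ZMod m))
        (cyclicShiftAct m (Equiv.Perm (Fin k)))) := by
  obtain ⟨M, rfl⟩ : ∃ M, m = M + 1 := ⟨m - 1, by omega⟩
  obtain rfl : n = k ^ M := by simpa using hn
  have : Nontrivial (Fin k) := Fin.nontrivial_iff_two_le.mpr hk
  refine nonempty_closure_mulEquiv_of_image_eq (digitEquiv k M).permCongrHom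
    wreathToPerm_injective (closure_inr_ofAdd_one_union_range_inl_mulSingle _ (-1)) ?_
  rw [Set.image_union, Set.image_union, Set.image_singleton, Set.image_singleton,
    ← Set.range_comp, ← Set.range_comp]
  congr 2
  · exact permCongr_digitEquiv_stdShuffle
  · exact funext permCongr_digitEquiv_pilePerm
end

section
/- Let d ≥ 1 and let ĝ be an invertible linear transformation of the vector space V = F_3^d. Then there exist nonnegative integers s and t (namely the dimensions of the 1-eigenspace and the (−1)-eigenspace of ĝ) such that the number of 1-dimensional subspaces L of V satisfying ĝ(L) = L equals (3^s + 3^t − 2)/2. Consequently, the fixed point ratio of the induced permutation of the set of all 1-dimensional subspaces of V (a set of size (3^d − 1)/2) equals (3^s + 3^t − 2)/(3^d − 1). -/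
open Module Projectivization
open scoped LinearAlgebra.Projectivization

section Helpers

variable {K V : Type*} [Field K] [Fintype K] [AddCommGroup V] [Module K V] [Finite V]

private noncomputable def fiberEquiv (p : ℙ K V) :
    {v : {v : V // v ≠ 0} // Projectivization.mk K v.1 v.2 = p} ≃ Kˣ := by
  refine Equiv.symm (Equiv.ofBijective
    (fun a => ⟨⟨(a : K) • p.rep, smul_ne_zero a.ne_zero p.rep_nonzero⟩, ?_⟩) ⟨?_, ?_⟩)
  · conv_rhs => rw [← p.mk_rep]
    rw [Projectivization.mk_eq_mk_iff']
    exact ⟨a, rfl⟩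
  · intro a b h
    have h' : (a : K) • p.rep = (b : K) • p.rep := congrArg (fun x => (x.1 : V)) h
    exact Units.ext (smul_left_injective K p.rep_nonzero h')
  · rintro ⟨⟨v, hv⟩, hp⟩
    rw [← p.mk_rep, Projectivization.mk_eq_mk_iff] at hp
    obtain ⟨a, ha⟩ := hp
    exact ⟨a, Subtype.ext (Subtype.ext (by simpa [Units.smul_def] using ha))⟩

private lemma card_units_mul_card_proj :
    Nat.card Kˣ * Nat.card (ℙ K V) = Nat.card V - 1 := by
  have e2 : {v : V // v ≠ 0} ≃ (Σ _p : ℙ K V, Kˣ) :=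
    ((Equiv.sigmaFiberEquiv (fun v : {v : V // v ≠ 0} =>
      Projectivization.mk K v.1 v.2)).symm).trans (Equiv.sigmaCongrRight fiberEquiv)
  have h1 : Nat.card {v : V // v ≠ 0} = Nat.card V - 1 := by
    haveI : Fintype V := Fintype.ofFinite V
    classical
    rw [Nat.card_eq_fintype_card, Nat.card_eq_fintype_card]
    have h := Fintype.card_subtype_compl (fun v : V => v = 0)
    have h0 : Fintype.card {v : V // v = 0} = 1 := Fintype.card_subtype_eq (0 : V)
    rw [h0] at h
    exact h
  rw [← h1, Nat.card_congr (e2.trans (Equiv.sigmaEquivProd _ _)), Nat.card_prod, mul_comm]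

private noncomputable def linesEquiv (W : Submodule K V) :
    ℙ K W ≃ {L : Submodule K V // finrank K L = 1 ∧ L ≤ W} :=
  (equivSubmodule K W).trans
  { toFun := fun H => ⟨Submodule.map W.subtype H.1,
      ⟨by rw [Submodule.finrank_map_subtype_eq]; exact H.2, Submodule.map_subtype_le _ _⟩⟩,
    invFun := fun L => ⟨Submodule.comap W.subtype L.1, by
      have hmc : Submodule.map W.subtype (Submodule.comap W.subtype L.1) = L.1 := by
        rw [Submodule.map_comap_subtype, inf_of_le_right L.2.2]
      rw [← Submodule.finrank_map_subtype_eq, hmc]; exact L.2.1⟩,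
    left_inv := fun H => Subtype.ext
      (Submodule.comap_map_eq_of_injective W.injective_subtype H.1),
    right_inv := fun L => Subtype.ext (by
      dsimp only
      rw [Submodule.map_comap_subtype, inf_of_le_right L.2.2]) }

end Helpers

private lemma card_lines_zmod3 {V : Type*} [AddCommGroup V] [Module (ZMod 3) V] [Finite V]
    (W : Submodule (ZMod 3) V) :
    Nat.card {L : Submodule (ZMod 3) V // finrank (ZMod 3) L = 1 ∧ L ≤ W} =
      (3 ^ finrank (ZMod 3) W - 1) / 2 := by
  have h := card_units_mul_card_proj (K := ZMod 3) (V := W)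
  have hK : Nat.card (ZMod 3)ˣ = 2 := by
    rw [Nat.card_eq_fintype_card]; decide
  have hW : Nat.card W = 3 ^ finrank (ZMod 3) W := by
    haveI : Fintype W := Fintype.ofFinite W
    rw [Nat.card_eq_fintype_card, card_eq_pow_finrank (K := ZMod 3), ZMod.card]
  rw [hK, hW] at h
  rw [← Nat.card_congr (linesEquiv W)]
  omega

/-- For an invertible linear transformation `ĝ` of `V = F_3^d`, there are nonnegative
integers `s`, `t` — the dimensions of the `1`-eigenspace and `(-1)`-eigenspace of `ĝ` —
such that the number of `1`-dimensional subspaces `L ≤ V` with `ĝ(L) = L` is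
`(3^s + 3^t - 2)/2`; consequently, the fixed point ratio of the induced permutation of
the set of `1`-dimensional subspaces of `V` (a set of size `(3^d - 1)/2`) equals
`(3^s + 3^t - 2)/(3^d - 1)`. -/
theorem fixedPointRatio_projective_pgl_d_3 (d : ℕ) (hd : 1 ≤ d)
    (g : (Fin d → ZMod 3) ≃ₗ[ZMod 3] (Fin d → ZMod 3)) :
    ∃ s t : ℕ,
      s = Module.finrank (ZMod 3) (Module.End.eigenspace g.toLinearMap 1) ∧
      t = Module.finrank (ZMod 3) (Module.End.eigenspace g.toLinearMap (-1)) ∧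
      Nat.card {L : Submodule (ZMod 3) (Fin d → ZMod 3) //
          Module.finrank (ZMod 3) L = 1 ∧ L.map g.toLinearMap = L} =
        (3 ^ s + 3 ^ t - 2) / 2 ∧
      Nat.card {L : Submodule (ZMod 3) (Fin d → ZMod 3) //
          Module.finrank (ZMod 3) L = 1} = (3 ^ d - 1) / 2 ∧
      (Nat.card {L : Submodule (ZMod 3) (Fin d → ZMod 3) //
          Module.finrank (ZMod 3) L = 1 ∧ L.map g.toLinearMap = L} : ℚ) /
        (Nat.card {L : Submodule (ZMod 3) (Fin d → ZMod 3) //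
          Module.finrank (ZMod 3) L = 1} : ℚ) =
        (3 ^ s + 3 ^ t - 2) / (3 ^ d - 1) := by
  classical
  set V := Fin d → ZMod 3
  set E1 := Module.End.eigenspace g.toLinearMap 1 with hE1
  set E2 := Module.End.eigenspace g.toLinearMap (-1) with hE2
  set s := finrank (ZMod 3) E1 with hs
  set t := finrank (ZMod 3) E2 with ht
  refine ⟨s, t, rfl, rfl, ?_⟩
  -- the key characterization of fixed lines
  have key : ∀ L : Submodule (ZMod 3) V, finrank (ZMod 3) L = 1 →
      (L.map g.toLinearMap = L ↔ (L ≤ E1 ∨ L ≤ E2)) := by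
    intro L hL
    obtain ⟨w, hw0, hspan⟩ : ∃ w : V, w ≠ 0 ∧ L = Submodule.span (ZMod 3) {w} := by
      obtain ⟨v, hv0, hv⟩ := finrank_eq_one_iff'.mp hL
      refine ⟨v, Subtype.coe_injective.ne hv0, ?_⟩
      apply le_antisymm
      · intro x hx
        obtain ⟨c, hc⟩ := hv ⟨x, hx⟩
        have hcx : c • (v : V) = x := congrArg Subtype.val hc
        rw [← hcx]
        exact Submodule.smul_mem _ _ (Submodule.mem_span_singleton_self _)
      · rw [Submodule.span_le, Set.singleton_subset_iff]
        exact v.2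
    rw [hspan]
    constructor
    · intro hmap
      have hgv : g.toLinearMap w ∈ Submodule.span (ZMod 3) {w} := by
        rw [← hmap]
        exact Submodule.mem_map_of_mem (Submodule.mem_span_singleton_self w)
      rw [Submodule.mem_span_singleton] at hgv
      obtain ⟨c, hc⟩ := hgv
      have hc0 : c ≠ 0 := by
        rintro rfl
        rw [zero_smul] at hc
        exact hw0 (g.injective (by simpa using hc.symm))
      have hcase : ∀ c : ZMod 3, c ≠ 0 → c = 1 ∨ c = -1 := by decide
      rcases hcase c hc0 with rfl | rfl
      · left
        rw [Submodule.span_le, Set.singleton_subset_iff]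
        rw [hE1, SetLike.mem_coe, Module.End.mem_eigenspace_iff, ← hc, one_smul]
      · right
        rw [Submodule.span_le, Set.singleton_subset_iff]
        rw [hE2, SetLike.mem_coe, Module.End.mem_eigenspace_iff, ← hc]
    · intro hle
      have hmaple : (Submodule.span (ZMod 3) {w}).map g.toLinearMap ≤
          Submodule.span (ZMod 3) {w} := by
        rcases hle with hle | hle
        · intro x hx
          obtain ⟨y, hy, rfl⟩ := hx
          have := Module.End.mem_eigenspace_iff.mp (hle hy)
          rw [this, one_smul]
          exact hy
        · intro x hx
          obtain ⟨y, hy, rfl⟩ := hx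
          have := Module.End.mem_eigenspace_iff.mp (hle hy)
          rw [this]
          exact Submodule.smul_mem _ _ hy
      exact Submodule.eq_of_le_of_finrank_eq hmaple
        (by rw [LinearEquiv.finrank_map_eq])
  -- disjointness of the two eigenspaces
  have hdisj : ∀ L : Submodule (ZMod 3) V, finrank (ZMod 3) L = 1 →
      L ≤ E1 → L ≤ E2 → False := by
    intro L hL h1 h2
    have hbot : L = ⊥ := by
      rw [eq_bot_iff]
      intro x hx
      have e1 : g.toLinearMap x = x := by
        simpa using Module.End.mem_eigenspace_iff.mp (h1 hx)
      have e2 : g.toLinearMap x = -x := by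
        simpa using Module.End.mem_eigenspace_iff.mp (h2 hx)
      have hxx : x + x = 0 := by
        have h' := e1.symm.trans e2
        rw [eq_neg_iff_add_eq_zero] at h'
        exact h'
      have h3' : x + x + x = 0 := by
        have h'' : ((1 : ZMod 3) + 1 + 1) • x = 0 := by
          have h0 : ((1 : ZMod 3) + 1 + 1) = 0 := by decide
          rw [h0, zero_smul]
        rw [add_smul, add_smul, one_smul] at h''
        exact h''
      have hx0 : x = 0 := by
        rw [hxx, zero_add] at h3'
        exact h3'
      simp [hx0]
    rw [hbot] at hL
    simp at hL
  haveI : Finite (Submodule (ZMod 3) V) :=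
    Finite.of_injective (fun L => (L : Set V)) SetLike.coe_injective
  -- count of fixed lines
  have count1 : Nat.card {L : Submodule (ZMod 3) V //
      Module.finrank (ZMod 3) L = 1 ∧ L.map g.toLinearMap = L} =
      (3 ^ s - 1) / 2 + (3 ^ t - 1) / 2 := by
    have e : {L : Submodule (ZMod 3) V //
        Module.finrank (ZMod 3) L = 1 ∧ L.map g.toLinearMap = L} ≃
        {L : Submodule (ZMod 3) V //
          (finrank (ZMod 3) L = 1 ∧ L ≤ E1) ∨ (finrank (ZMod 3) L = 1 ∧ L ≤ E2)} :=
      Equiv.subtypeEquivRight fun L => by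
        constructor
        · rintro ⟨h1, h2⟩
          rcases (key L h1).mp h2 with h | h
          · exact Or.inl ⟨h1, h⟩
          · exact Or.inr ⟨h1, h⟩
        · rintro (⟨h1, h⟩ | ⟨h1, h⟩)
          · exact ⟨h1, (key L h1).mpr (Or.inl h)⟩
          · exact ⟨h1, (key L h1).mpr (Or.inr h)⟩
    rw [Nat.card_congr e]
    haveI : Fintype (Submodule (ZMod 3) V) := Fintype.ofFinite _
    rw [Nat.card_eq_fintype_card]
    rw [Fintype.card_subtype_or_disjoint _ _ ?_]
    · rw [← Nat.card_eq_fintype_card, ← Nat.card_eq_fintype_card,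
        card_lines_zmod3 E1, card_lines_zmod3 E2, ← hs, ← ht]
    · intro r hr1 hr2 L hL
      exact False.elim (hdisj L (hr1 L hL).1 (hr1 L hL).2 (hr2 L hL).2)
  -- count of all lines
  have count2 : Nat.card {L : Submodule (ZMod 3) V //
      Module.finrank (ZMod 3) L = 1} = (3 ^ d - 1) / 2 := by
    have e : {L : Submodule (ZMod 3) V // Module.finrank (ZMod 3) L = 1} ≃
        {L : Submodule (ZMod 3) V // finrank (ZMod 3) L = 1 ∧ L ≤ ⊤} :=
      Equiv.subtypeEquivRight fun L => by simp
    rw [Nat.card_congr e, card_lines_zmod3 (⊤ : Submodule (ZMod 3) V)]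
    rw [finrank_top, Module.finrank_fin_fun]
  -- arithmetic
  have hso : 3 ^ s % 2 = 1 := by rw [Nat.pow_mod]; norm_num
  have hto : 3 ^ t % 2 = 1 := by rw [Nat.pow_mod]; norm_num
  have hdo : 3 ^ d % 2 = 1 := by rw [Nat.pow_mod]; norm_num
  have hs1 : 1 ≤ 3 ^ s := Nat.one_le_pow _ _ (by norm_num)
  have ht1 : 1 ≤ 3 ^ t := Nat.one_le_pow _ _ (by norm_num)
  have hd3 : 3 ≤ 3 ^ d := by
    calc 3 = 3 ^ 1 := (pow_one 3).symm
    _ ≤ 3 ^ d := Nat.pow_le_pow_right (by norm_num) hd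
  refine ⟨by rw [count1]; omega, count2, ?_⟩
  rw [count1, count2]
  have e1 : ((((3 ^ s - 1) / 2 + (3 ^ t - 1) / 2 : ℕ)) : ℚ) =
      ((3 : ℚ) ^ s + 3 ^ t - 2) / 2 := by
    have h2 : ((3 ^ s - 1) / 2 + (3 ^ t - 1) / 2) * 2 = 3 ^ s + 3 ^ t - 2 := by omega
    have h3 := congrArg (Nat.cast (R := ℚ)) h2
    rw [Nat.cast_mul, Nat.cast_sub (by omega : 2 ≤ 3 ^ s + 3 ^ t)] at h3
    push_cast at h3 ⊢
    linarith
  have e2 : (((3 ^ d - 1) / 2 : ℕ) : ℚ) = ((3 : ℚ) ^ d - 1) / 2 := by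
    have h2 : ((3 ^ d - 1) / 2) * 2 = 3 ^ d - 1 := by omega
    have h3 := congrArg (Nat.cast (R := ℚ)) h2
    rw [Nat.cast_mul, Nat.cast_sub (by omega : 1 ≤ 3 ^ d)] at h3
    push_cast at h3 ⊢
    linarith
  rw [e1, e2]
  have hden : (3 : ℚ) ^ d - 1 ≠ 0 := by
    have h4 : (3 : ℚ) ≤ 3 ^ d := by
      calc (3 : ℚ) = 3 ^ 1 := (pow_one 3).symm
      _ ≤ 3 ^ d := by
        apply pow_le_pow_right₀ (by norm_num) hd
    linarith
  field_simp
end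

section
/- Let k ≥ 3 and n = k^s·t with s ≥ 1, t ≥ 2 and k not dividing t, and let x ∈ {0,1,...,kn−2} satisfy 1 ≤ T(x) ≤ s. Then there exists y in the orbit of x under the group H such that either T(y) = 0, or the base-k digits of ⌊y/t⌋ satisfy y_0 = 0 and y_1 = k−1 and T(y) ≤ T(x). -/
/-- The subgroup `H` of `Sym({0,…,kn-1})` generated by `σ` together with all `ρ_τ` for
permutations `τ` of the `k` piles fixing the last pile `k - 1`. -/
def stabSubgroup (k n : ℕ) : Subgroup (Equiv.Perm (Fin (k * n))) :=
  Subgroup.closure ({stdShuffle k n} ∪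
    {g | ∃ τ : Equiv.Perm (Fin k),
      (∀ h : k - 1 < k, τ ⟨k - 1, h⟩ = ⟨k - 1, h⟩) ∧ g = pilePerm k n τ})

/-- `Tcount k t s x` is `T(x)`: the number of indices `i ∈ {0,…,s}` such that the
`i`-th base-`k` digit of `⌊x/t⌋` equals `k - 1`. -/
def Tcount (k t s x : ℕ) : ℕ :=
  ((Finset.range (s + 1)).filter fun i => x / t / k ^ i % k = k - 1).card

open Finset MulAction

namespace ShuffleOrbit

lemma mem_orbit_trans {G α : Type*} [Group G] [MulAction G α] {x y z : α}
    (hy : y ∈ orbit G x) (hz : z ∈ orbit G y) : z ∈ orbit G x :=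
  orbit_eq_iff.mpr hy ▸ hz

def digit (k i N : ℕ) : ℕ := N / k ^ i % k

section Digits

variable {k : ℕ}

lemma digit_lt (hk : 0 < k) (i N : ℕ) : digit k i N < k := Nat.mod_lt _ hk

lemma digit_div_pow (i j N : ℕ) : digit k i (N / k ^ j) = digit k (i + j) N := by
  rw [digit, digit, Nat.div_div_eq_div_mul, ← pow_add, add_comm j]

lemma digit_add_mul_pow_of_lt (hk : 0 < k) {i j : ℕ} (hji : j < i) (N c : ℕ) :
    digit k j (N + c * k ^ i) = digit k j N := by
  obtain ⟨l, rfl⟩ := Nat.exists_eq_add_of_lt hji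
  have : c * k ^ (j + l + 1) = (c * k ^ l * k) * k ^ j := by ring
  rw [digit, digit, this, Nat.add_mul_div_right _ _ (pow_pos hk j), Nat.add_mul_mod_self_right]

lemma digit_add_mul_pow_self (hk : 0 < k) {i N c : ℕ} (hN : N < k ^ i) (hc : c < k) :
    digit k i (N + c * k ^ i) = c := by
  rw [digit, Nat.add_mul_div_right _ _ (pow_pos hk i), Nat.div_eq_of_lt hN, zero_add,
    Nat.mod_eq_of_lt hc]

lemma digit_of_add_mul_pow_eq (hk : 0 < k) {i a b N N' : ℕ} (ha : digit k i N = a)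
    (hb : b < k) (h : N' + a * k ^ i = N + b * k ^ i) (j : ℕ) :
    digit k j N' = if j = i then b else digit k j N := by
  rcases lt_or_ge j i with hji | hij
  · rw [if_neg hji.ne, ← digit_add_mul_pow_of_lt hk hji N' a, h,
      digit_add_mul_pow_of_lt hk hji]
  obtain ⟨l, rfl⟩ := Nat.exists_eq_add_of_le' hij
  have hQ : N' / k ^ i + a = N / k ^ i + b := by
    rw [← Nat.add_mul_div_right _ _ (pow_pos hk i), h, Nat.add_mul_div_right _ _ (pow_pos hk i)]
  have hN : N / k ^ i = k * (N / k ^ i / k) + a := by rw [← ha, digit, Nat.div_add_mod]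
  have hN' : N' / k ^ i = b + k * (N / k ^ i / k) := by omega
  rw [← digit_div_pow, ← digit_div_pow, hN']
  rcases l with _ | l
  · simp [digit, Nat.add_mul_mod_self_left, Nat.mod_eq_of_lt hb]
  · rw [if_neg (by omega), ← digit_div_pow l 1, ← digit_div_pow l 1, pow_one,
      Nat.add_mul_div_left _ _ hk, Nat.div_eq_of_lt hb, zero_add]

end Digits

lemma mod_eq_digit_zero_mul_add_mod (k t z : ℕ) :
    z % k = (digit k 0 (z / t) * t + z % t) % k := by
  have h := ((Nat.mod_modEq (z / t) k).mul_right t).add_right (z % t)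
  rw [Nat.div_add_mod'] at h
  simpa [digit, Nat.ModEq] using h.symm

lemma exists_lt_pred_mod_ne {k t : ℕ} (hk : 3 ≤ k) (hkt : ¬ k ∣ t) (r : ℕ) :
    ∃ v < k - 1, (v * t + r) % k ≠ k - 1 := by
  by_cases hr : r % k = k - 1
  · refine ⟨1, by omega, fun h => hkt (Nat.modEq_zero_iff_dvd.1 ?_)⟩
    refine Nat.ModEq.add_right_cancel' r ?_
    rw [Nat.ModEq, zero_add, hr, ← h, one_mul]
  · exact ⟨0, by omega, by simpa using hr⟩

section Perm

variable {k n : ℕ}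

lemma stdShuffle_inv_apply_val (x : Fin (k * n)) :
    (((stdShuffle k n)⁻¹ x : Fin (k * n)) : ℕ) = x / k + n * (x % k) := by
  simp [stdShuffle, Equiv.Perm.inv_def, finProdFinEquiv, Fin.divNat, Fin.modNat, finCongr]

lemma pilePerm_apply_val (τ : Equiv.Perm (Fin k)) (x : Fin (k * n)) :
    ((pilePerm k n τ x : Fin (k * n)) : ℕ) = x % n + n * τ (Fin.divNat x) := by
  simp [pilePerm, finProdFinEquiv, Fin.modNat]

lemma stdShuffle_inv_mem_orbit (x : Fin (k * n)) :
    (stdShuffle k n)⁻¹ x ∈ orbit (stabSubgroup k n) x :=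
  ⟨⟨_, inv_mem (Subgroup.subset_closure (Or.inl rfl))⟩, rfl⟩

lemma stdShuffle_mem_orbit (x : Fin (k * n)) :
    stdShuffle k n x ∈ orbit (stabSubgroup k n) x :=
  ⟨⟨_, Subgroup.subset_closure (Or.inl rfl)⟩, rfl⟩

lemma pilePerm_mem_orbit {τ : Equiv.Perm (Fin k)}
    (hτ : ∀ h : k - 1 < k, τ ⟨k - 1, h⟩ = ⟨k - 1, h⟩) (x : Fin (k * n)) :
    pilePerm k n τ x ∈ orbit (stabSubgroup k n) x :=
  ⟨⟨_, Subgroup.subset_closure (Or.inr ⟨τ, hτ, rfl⟩)⟩, rfl⟩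

lemma stdShuffle_inv_val_add (hk : 0 < k) (z m : ℕ) :
    (z + k * m) / k + n * ((z + k * m) % k) = z / k + n * (z % k) + m := by
  rw [Nat.add_mul_div_left _ _ hk, Nat.add_mul_mod_self_left]
  ring

end Perm

lemma mem_orbit_stabSubgroup_iff {k n : ℕ} {x y : Fin (k * n)} :
    y ∈ orbit (stabSubgroup k n) x ↔ ∃ g ∈ stabSubgroup k n, g x = y :=
  ⟨fun ⟨⟨g, hg⟩, h⟩ => ⟨g, hg, h⟩, fun ⟨g, hg, h⟩ => ⟨⟨g, hg⟩, h⟩⟩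

lemma Tcount_eq_card (k t s x : ℕ) :
    Tcount k t s x = #{i ∈ range (s + 1) | digit k i (x / t) = k - 1} :=
  rfl

lemma Tcount_eq_sum (k t s x : ℕ) :
    Tcount k t s x = ∑ i ∈ range (s + 1), if digit k i (x / t) = k - 1 then 1 else 0 :=
  card_filter _ _

lemma exists_digit_ne_of_Tcount_le {k t s x : ℕ} (h : Tcount k t s x ≤ s) :
    ∃ m ≤ s, digit k m (x / t) ≠ k - 1 := by
  by_contra! hall
  have : Tcount k t s x = s + 1 := by
    rw [Tcount_eq_card, filter_true_of_mem fun i hi => hall i (Nat.lt_succ_iff.1 (mem_range.1 hi)),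
      card_range]
  omega

lemma exists_digit_eq_of_Tcount_pos {k t s x : ℕ} (h : 0 < Tcount k t s x) :
    ∃ p ≤ s, digit k p (x / t) = k - 1 := by
  rw [Tcount_eq_card] at h
  obtain ⟨p, hp⟩ := card_pos.1 h
  rw [mem_filter, mem_range] at hp
  exact ⟨p, Nat.lt_succ_iff.1 hp.1, hp.2⟩

section Shuffle

variable {k s t n : ℕ}

lemma div_div_lt_pow (hn : n = k ^ s * t) (x : Fin (k * n)) : (x : ℕ) / t / k < k ^ s := by
  rw [Nat.div_div_eq_div_mul]
  refine Nat.div_lt_of_lt_mul (x.isLt.trans_eq ?_)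
  rw [hn]; ring

lemma stdShuffle_inv_val_div (ht : 0 < t) (hn : n = k ^ s * t) (x : Fin (k * n)) :
    (((stdShuffle k n)⁻¹ x : Fin (k * n)) : ℕ) / t = x / t / k + x % k * k ^ s := by
  rw [stdShuffle_inv_apply_val]
  generalize (x : ℕ) = a
  rw [hn, show k ^ s * t * (a % k) = a % k * k ^ s * t by ring, Nat.add_mul_div_right _ _ ht,
    Nat.div_div_eq_div_mul, Nat.div_div_eq_div_mul, mul_comm]

lemma digit_stdShuffle_inv_of_lt (hk : 0 < k) (ht : 0 < t) (hn : n = k ^ s * t)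
    (x : Fin (k * n)) {j : ℕ} (hj : j < s) :
    digit k j ((((stdShuffle k n)⁻¹ x : Fin (k * n)) : ℕ) / t) = digit k (j + 1) (x / t) := by
  rw [stdShuffle_inv_val_div ht hn, digit_add_mul_pow_of_lt hk hj, ← digit_div_pow, pow_one]

lemma digit_stdShuffle_inv_self (hk : 0 < k) (ht : 0 < t) (hn : n = k ^ s * t)
    (x : Fin (k * n)) :
    digit k s ((((stdShuffle k n)⁻¹ x : Fin (k * n)) : ℕ) / t) = x % k := by
  rw [stdShuffle_inv_val_div ht hn,
    digit_add_mul_pow_self hk (div_div_lt_pow hn x) (Nat.mod_lt _ hk)]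

lemma Tcount_stdShuffle_inv (hk : 0 < k) (ht : 0 < t) (hn : n = k ^ s * t) (x : Fin (k * n)) :
    Tcount k t s ((stdShuffle k n)⁻¹ x : Fin (k * n)) +
        (if digit k 0 (x / t) = k - 1 then 1 else 0) =
      Tcount k t s x + (if (x : ℕ) % k = k - 1 then 1 else 0) := by
  rw [Tcount_eq_sum, Tcount_eq_sum, sum_range_succ, sum_range_succ',
    digit_stdShuffle_inv_self hk ht hn,
    sum_congr rfl fun j hj => by rw [digit_stdShuffle_inv_of_lt hk ht hn x (mem_range.1 hj)]]
  ring

lemma div_eq_digit (hn : n = k ^ s * t) (x : Fin (k * n)) :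
    (x : ℕ) / n = digit k s (x / t) := by
  have hlt : (x : ℕ) / n < k := Nat.div_lt_of_lt_mul (x.isLt.trans_eq (mul_comm k n))
  rw [digit, Nat.div_div_eq_div_mul, mul_comm t, ← hn, Nat.mod_eq_of_lt hlt]

lemma exists_mem_orbit_add_digit_mul_eq (hk : 0 < k) (ht : 0 < t) (hn : n = k ^ s * t)
    {i v : ℕ} (hi : i ≤ s) (hv : v < k) (hvk : v ≠ k - 1) (x : Fin (k * n))
    (hx : digit k i (x / t) ≠ k - 1) :
    ∃ y ∈ orbit (stabSubgroup k n) x,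
      (y : ℕ) + digit k i (x / t) * (k ^ i * t) = x + v * (k ^ i * t) := by
  induction hi using Nat.decreasingInduction generalizing x with
  | self =>
    have hxa : (x : ℕ) / n = digit k s (x / t) := div_eq_digit hn x
    let τ := Equiv.swap (⟨_, digit_lt hk s (x / t)⟩ : Fin k) ⟨v, hv⟩
    have hτ : ∀ h : k - 1 < k, τ ⟨k - 1, h⟩ = ⟨k - 1, h⟩ := fun _ =>
      Equiv.swap_apply_of_ne_of_ne (Fin.ne_of_val_ne (Ne.symm hx)) (Fin.ne_of_val_ne hvk.symm)
    refine ⟨_, pilePerm_mem_orbit hτ x, ?_⟩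
    have hdiv : Fin.divNat x = ⟨_, digit_lt hk s (x / t)⟩ := Fin.ext hxa
    have hdecomp := Nat.mod_add_div (x : ℕ) n
    rw [hxa] at hdecomp
    rw [pilePerm_apply_val, hdiv, Equiv.swap_apply_left, ← hn]
    linarith
  | of_succ i hi ih =>
    set x' := stdShuffle k n x
    have hx' : (stdShuffle k n)⁻¹ x' = x := (stdShuffle k n).symm_apply_apply x
    have hdig : digit k i (x / t) = digit k (i + 1) (x' / t) := by
      rw [← digit_stdShuffle_inv_of_lt hk ht hn x' hi, hx']
    obtain ⟨y', hy', hy'x'⟩ := ih x' (hdig ▸ hx)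
    refine ⟨(stdShuffle k n)⁻¹ y', mem_orbit_trans (mem_orbit_trans
      (stdShuffle_mem_orbit x) hy') (stdShuffle_inv_mem_orbit y'), ?_⟩
    have e := congrArg (fun z => z / k + n * (z % k)) hy'x'
    simp only [show ∀ c, c * (k ^ (i + 1) * t) = k * (c * (k ^ i * t)) from fun c => by ring,
      stdShuffle_inv_val_add hk] at e
    rw [stdShuffle_inv_apply_val, hdig, e, ← stdShuffle_inv_apply_val, hx']

lemma exists_mem_orbit_digit_zero_eq (hk : 0 < k) (ht : 0 < t) (hn : n = k ^ s * t)
    {v : ℕ} (hv : v < k) (hvk : v ≠ k - 1) (x : Fin (k * n))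
    (hx : digit k 0 (x / t) ≠ k - 1) :
    ∃ y ∈ orbit (stabSubgroup k n) x, digit k 0 (y / t) = v ∧
      (∀ j ≠ 0, digit k j (y / t) = digit k j (x / t)) ∧
      Tcount k t s y = Tcount k t s x ∧ (y : ℕ) % k = (v * t + x % t) % k := by
  obtain ⟨y, hy, hyx⟩ := exists_mem_orbit_add_digit_mul_eq hk ht hn (Nat.zero_le s) hv hvk x hx
  rw [pow_zero, one_mul] at hyx
  have hdiv : (y : ℕ) / t + digit k 0 (x / t) * k ^ 0 = x / t + v * k ^ 0 := by
    simp only [pow_zero, mul_one]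
    rw [← Nat.add_mul_div_right _ _ ht, hyx, Nat.add_mul_div_right _ _ ht]
  have hmod : (y : ℕ) % t = x % t := by
    rw [← Nat.add_mul_mod_self_right _ (digit k 0 _), hyx, Nat.add_mul_mod_self_right]
  have hdig := digit_of_add_mul_pow_eq hk rfl hv hdiv
  refine ⟨y, hy, by simpa using hdig 0, fun j hj => by simpa [hj] using hdig j, ?_, ?_⟩
  · rw [Tcount_eq_sum, Tcount_eq_sum]
    refine sum_congr rfl fun j _ => ?_
    rw [hdig j]
    split_ifs <;> simp_all
  · rw [mod_eq_digit_zero_mul_add_mod k t y, hmod, hdig 0, if_pos rfl]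

lemma exists_mem_orbit_digit_zero_eq_zero (hk : 3 ≤ k) (hkt : ¬ k ∣ t) (ht : 0 < t)
    (hn : n = k ^ s * t) {p : ℕ} (hp : 1 ≤ p) (hps : p ≤ s) (x : Fin (k * n))
    (hx0 : digit k 0 (x / t) ≠ k - 1) (hxp : digit k p (x / t) = k - 1) :
    ∃ y ∈ orbit (stabSubgroup k n) x, digit k 0 (y / t) = 0 ∧ digit k 1 (y / t) = k - 1 ∧
      Tcount k t s y = Tcount k t s x := by
  have hk0 : 0 < k := by omega
  induction p generalizing x with
  | zero => omega
  | succ p ih =>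
    by_cases hx1 : digit k 1 (x / t) = k - 1
    · obtain ⟨y, hy, hy0, hyj, hyT, -⟩ :=
        exists_mem_orbit_digit_zero_eq hk0 ht hn hk0 (by omega) x hx0
      exact ⟨y, hy, hy0, (hyj 1 one_ne_zero).trans hx1, hyT⟩
    have hp1 : 1 ≤ p := Nat.one_le_iff_ne_zero.2 (by rintro rfl; exact hx1 hxp)
    obtain ⟨v, hv, hvmod⟩ := exists_lt_pred_mod_ne hk hkt (x % t)
    obtain ⟨y, hy, hy0, hyj, hyT, hymod⟩ :=
      exists_mem_orbit_digit_zero_eq hk0 ht hn (by omega) hv.ne x hx0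
    have hx'j : ∀ j < s, digit k j ((((stdShuffle k n)⁻¹ y : Fin (k * n)) : ℕ) / t) =
        digit k (j + 1) (x / t) := fun j hj =>
      (digit_stdShuffle_inv_of_lt hk0 ht hn y hj).trans (hyj _ j.succ_ne_zero)
    have hx'T := Tcount_stdShuffle_inv hk0 ht hn y
    rw [hy0, if_neg hv.ne, hymod, if_neg hvmod, hyT] at hx'T
    obtain ⟨z, hz, hz0, hz1, hzT⟩ := ih hp1 (by omega) ((stdShuffle k n)⁻¹ y)
      (by rw [hx'j 0 (by omega)]; exact hx1) (by rw [hx'j p (by omega)]; exact hxp)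
    exact ⟨z, mem_orbit_trans (mem_orbit_trans hy (stdShuffle_inv_mem_orbit y)) hz,
      hz0, hz1, by omega⟩

lemma exists_mem_orbit_digit_zero_ne (hk : 0 < k) (ht : 0 < t) (hn : n = k ^ s * t)
    {m : ℕ} (hm : m ≤ s) (x : Fin (k * n)) (hxm : digit k m (x / t) ≠ k - 1) :
    ∃ y ∈ orbit (stabSubgroup k n) x, digit k 0 (y / t) ≠ k - 1 ∧
      Tcount k t s y ≤ Tcount k t s x := by
  induction m generalizing x with
  | zero => exact ⟨x, mem_orbit_self x, hxm, le_rfl⟩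
  | succ m ih =>
    by_cases hx0 : digit k 0 (x / t) = k - 1
    · have hyT := Tcount_stdShuffle_inv hk ht hn x
      rw [if_pos hx0] at hyT
      obtain ⟨z, hz, hz0, hzT⟩ := ih (by omega) ((stdShuffle k n)⁻¹ x)
        (by rw [digit_stdShuffle_inv_of_lt hk ht hn x (by omega)]; exact hxm)
      refine ⟨z, mem_orbit_trans (stdShuffle_inv_mem_orbit x) hz, hz0, ?_⟩
      split_ifs at hyT <;> omega
    · exact ⟨x, mem_orbit_self x, hx0, le_rfl⟩

end Shuffle

end ShuffleOrbit

open ShuffleOrbit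

theorem exists_orbit_elt_digits_general (k s t n : ℕ) (hk : 3 ≤ k) (hkt : ¬ k ∣ t)
    (hn : n = k ^ s * t) (x : Fin (k * n)) (hT2 : Tcount k t s (x : ℕ) ≤ s) :
    ∃ y : Fin (k * n), (∃ g ∈ stabSubgroup k n, g x = y) ∧
      (Tcount k t s (y : ℕ) = 0 ∨
        ((y : ℕ) / t % k = 0 ∧ (y : ℕ) / t / k % k = k - 1 ∧
          Tcount k t s (y : ℕ) ≤ Tcount k t s (x : ℕ))) := by
  have hk0 : 0 < k := by omega
  have ht : 0 < t := Nat.pos_of_ne_zero fun h => hkt (h ▸ dvd_zero k)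
  obtain ⟨m, hms, hm⟩ := exists_digit_ne_of_Tcount_le hT2
  obtain ⟨y, hy, hy0, hyT⟩ := exists_mem_orbit_digit_zero_ne hk0 ht hn hms x hm
  rcases Nat.eq_zero_or_pos (Tcount k t s y) with hT0 | hTpos
  · exact ⟨y, mem_orbit_stabSubgroup_iff.1 hy, Or.inl hT0⟩
  obtain ⟨p, hps, hp⟩ := exists_digit_eq_of_Tcount_pos hTpos
  obtain ⟨z, hz, hz0, hz1, hzT⟩ := exists_mem_orbit_digit_zero_eq_zero hk hkt ht hn
    (Nat.one_le_iff_ne_zero.2 (by rintro rfl; exact hy0 hp)) hps y hy0 hp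
  refine ⟨z, mem_orbit_stabSubgroup_iff.1 (mem_orbit_trans hy hz), Or.inr ⟨?_, ?_, hzT ▸ hyT⟩⟩
  · simpa [digit] using hz0
  · simpa [digit] using hz1

/-- Let `k ≥ 3`, `n = k^s * t` with `s ≥ 1`, `t ≥ 2` and `k ∤ t`, and let
`x ∈ {0,…,kn-2}` satisfy `1 ≤ T(x) ≤ s`. Then there exists `y` in the `H`-orbit of
`x` such that either `T(y) = 0`, or the base-`k` digits of `⌊y/t⌋` satisfy `y₀ = 0`
and `y₁ = k - 1` and `T(y) ≤ T(x)`. -/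
theorem exists_orbit_elt_digits (k s t n : ℕ) (hk : 3 ≤ k) (hs : 1 ≤ s)
    (ht : 2 ≤ t) (hkt : ¬ k ∣ t) (hn : n = k ^ s * t)
    (x : Fin (k * n)) (hx : (x : ℕ) + 1 < k * n)
    (hT1 : 1 ≤ Tcount k t s (x : ℕ)) (hT2 : Tcount k t s (x : ℕ) ≤ s) :
    ∃ y : Fin (k * n), (∃ g ∈ stabSubgroup k n, g x = y) ∧
      (Tcount k t s (y : ℕ) = 0 ∨
        ((y : ℕ) / t % k = 0 ∧ (y : ℕ) / t / k % k = k - 1 ∧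
          Tcount k t s (y : ℕ) ≤ Tcount k t s (x : ℕ))) :=
  exists_orbit_elt_digits_general k s t n hk hkt hn x hT2
end

section
/- Let k ≥ 3 and n = k^s·t with s ≥ 1, t ≥ 2 and k not dividing t. If x ∈ {0,1,...,kn−2} satisfies T(x) = s+1 (i.e., every base-k digit x_0,...,x_s of ⌊x/t⌋ equals k−1), then the orbit of x under the group H contains an integer strictly smaller than x. -/
lemma stdShuffle_coe (k n : ℕ) (x : Fin (k * n)) :
    (stdShuffle k n x : ℕ) = (x : ℕ) % n * k + (x : ℕ) / n := by
  simp [stdShuffle, finProdFinEquiv, Fin.divNat, Fin.modNat]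
  ring

lemma mod_pow_eq_of_digits (k m : ℕ) (hk : 1 ≤ k) :
    ∀ j, (∀ i < j, m / k ^ i % k = k - 1) → m % k ^ j = k ^ j - 1 := by
  intro j
  induction j with
  | zero => simp [Nat.mod_one]
  | succ j ih =>
    intro h
    rw [Nat.mod_pow_succ, ih (fun i hi => h i (by omega)), h j (by omega)]
    have hkj : 1 ≤ k ^ j := Nat.one_le_pow _ _ (by omega)
    have hp : k ^ (j + 1) = k ^ j * k := pow_succ k j
    have h1 : k ^ j * (k - 1) + k ^ j * 1 = k ^ j * k := by
      rw [← Nat.mul_add]; congr 1; omega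
    omega

/-- Let `k ≥ 3`, `n = k^s * t` with `s ≥ 1`, `t ≥ 2` and `k ∤ t`. If
`x ∈ {0,…,kn-2}` satisfies `T(x) = s + 1` (every base-`k` digit of `⌊x/t⌋` equals
`k-1`), then the `H`-orbit of `x` contains an integer strictly smaller than `x`. -/
theorem exists_orbit_elt_lt (k s t n : ℕ) (hk : 3 ≤ k) (hs : 1 ≤ s)
    (ht : 2 ≤ t) (hkt : ¬ k ∣ t) (hn : n = k ^ s * t)
    (x : Fin (k * n)) (hx : (x : ℕ) + 1 < k * n)
    (hT : Tcount k t s (x : ℕ) = s + 1) :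
    ∃ y : Fin (k * n), (∃ g ∈ stabSubgroup k n, g x = y) ∧ (y : ℕ) < (x : ℕ) := by
  have hkpos : 0 < k := by omega
  have htpos : 0 < t := by omega
  -- every digit of x / t equals k - 1
  have hdig : ∀ i < s + 1, (x : ℕ) / t / k ^ i % k = k - 1 := by
    intro i hi
    by_contra hne
    have hcard : ((Finset.range (s + 1)).filter
        fun i => (x : ℕ) / t / k ^ i % k = k - 1).card < s + 1 := by
      calc _ < (Finset.range (s + 1)).card := by
              apply Finset.card_lt_card
              refine ⟨Finset.filter_subset _ _, fun hsub => hne ?_⟩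
              exact (Finset.mem_filter.mp (hsub (Finset.mem_range.mpr hi))).2
           _ = s + 1 := Finset.card_range _
    rw [Tcount] at hT
    omega
  have hm : (x : ℕ) / t % k ^ (s + 1) = k ^ (s + 1) - 1 :=
    mod_pow_eq_of_digits k _ (by omega) (s + 1) hdig
  have hxlt : (x : ℕ) < k * n := x.2
  have hkn : k * n = k ^ (s + 1) * t := by rw [hn, pow_succ]; ring
  have hklt : (x : ℕ) / t < k ^ (s + 1) := by
    rw [Nat.div_lt_iff_lt_mul htpos, ← hkn]; exact hxlt
  have hmeq : (x : ℕ) / t = k ^ (s + 1) - 1 := by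
    rw [← Nat.mod_eq_of_lt hklt, hm]
  have hP : k ≤ k ^ (s + 1) := by
    calc k = k ^ 1 := (pow_one k).symm
      _ ≤ k ^ (s + 1) := Nat.pow_le_pow_right hkpos (by omega)
  obtain ⟨Q, hQ⟩ : ∃ Q, k ^ (s + 1) = Q + 1 := ⟨k ^ (s + 1) - 1, by omega⟩
  -- x ≥ t * Q = k * n - t
  have hxtQ : (x : ℕ) / t = Q := by omega
  have hxtq : t * Q ≤ (x : ℕ) := by
    calc t * Q = (x : ℕ) / t * t := by rw [hxtQ, Nat.mul_comm]
      _ ≤ (x : ℕ) := Nat.div_mul_le_self _ _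
  have hknQ : k * n = t * Q + t := by rw [hkn, hQ]; ring
  have htn : t ≤ n := by
    rw [hn]
    calc t = 1 * t := (one_mul t).symm
      _ ≤ k ^ s * t := Nat.mul_le_mul_right t (Nat.one_le_pow _ _ hkpos)
  obtain ⟨c, hc⟩ : ∃ c, k = c + 1 := ⟨k - 1, by omega⟩
  have hc2 : 2 ≤ c := by omega
  have hsplit : k * n = c * n + n := by rw [hc]; ring
  have hsplit2 : (c + 1) * n = c * n + n := by ring
  have hsplit3 : k * n = (c + 1) * n := by rw [hc]
  -- x / n = c
  have hdiv : (x : ℕ) / n = c := Nat.div_eq_of_lt_le (by omega) (by omega)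
  have hdm := Nat.div_add_mod (x : ℕ) n
  rw [hdiv] at hdm
  have hmodle : (x : ℕ) % n + 2 ≤ n := by
    have hcm : n * c = c * n := Nat.mul_comm n c
    omega
  -- the witness
  refine ⟨stdShuffle k n x, ⟨stdShuffle k n, Subgroup.subset_closure (Or.inl rfl), rfl⟩, ?_⟩
  rw [stdShuffle_coe, hdiv]
  have hcm : n * c = c * n := Nat.mul_comm n c
  have hmul : c * ((x : ℕ) % n + 2) ≤ c * n := Nat.mul_le_mul_left c hmodle
  nlinarith [hdm, hmul, hc2]
end

section
/- Let k ≥ 2 and n ≥ 1. The shuffle group G_{k,kn} is contained in the alternating group on {0,1,...,kn−1} if and only if either n ≡ 0 (mod 4), or n ≡ 2 (mod 4) and k ≡ 0 or 1 (mod 4). -/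
lemma stdShuffle_apply_val (k n : ℕ) (x : Fin (k * n)) :
    (stdShuffle k n x : ℕ) = (x : ℕ) / n + k * ((x : ℕ) % n) := rfl

lemma finProd_divNat_modNat {m n : ℕ} (y : Fin (m * n)) :
    finProdFinEquiv (y.divNat, y.modNat) = y := by
  apply Fin.ext
  exact Nat.mod_add_div _ _

lemma divNat_finProd {m n : ℕ} (a : Fin m) (b : Fin n) :
    (finProdFinEquiv (a, b)).divNat = a :=
  congrArg Prod.fst (finProdFinEquiv.symm_apply_apply (a, b))

lemma modNat_finProd {m n : ℕ} (a : Fin m) (b : Fin n) :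
    (finProdFinEquiv (a, b)).modNat = b :=
  congrArg Prod.snd (finProdFinEquiv.symm_apply_apply (a, b))

lemma finProd_val {m n : ℕ} (a : Fin m) (b : Fin n) :
    (finProdFinEquiv (a, b) : ℕ) = (b : ℕ) + n * (a : ℕ) := rfl

lemma sign_eq_signAux {N : ℕ} (f : Equiv.Perm (Fin N)) :
    Equiv.Perm.sign f = Equiv.Perm.signAux f := by
  refine Equiv.Perm.swap_induction_on f ?_ ?_
  · simp [Equiv.Perm.signAux_one]
  · intro g x y hxy ih
    rw [Equiv.Perm.signAux_mul, map_mul, Equiv.Perm.sign_swap hxy,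
      Equiv.Perm.signAux_swap hxy, ih]

lemma signAux_eq_pow {N : ℕ} (f : Equiv.Perm (Fin N)) :
    Equiv.Perm.signAux f =
      (-1) ^ ((Equiv.Perm.finPairsLT N).filter (fun x => f x.1 ≤ f x.2)).card := by
  rw [Equiv.Perm.signAux, Finset.prod_ite, Finset.prod_const, Finset.prod_const, one_pow,
    mul_one]

lemma card_finPairsLT (m : ℕ) :
    (Equiv.Perm.finPairsLT m).card = ∑ i ∈ Finset.range m, i := by
  rw [Equiv.Perm.finPairsLT, Finset.card_sigma]
  simp only [Finset.card_attachFin, Finset.card_range]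
  exact Fin.sum_univ_eq_sum_range (fun i => i) m

lemma even_sum_range_iff (m : ℕ) :
    Even (∑ i ∈ Finset.range m, i) ↔ (m % 4 = 0 ∨ m % 4 = 1) := by
  induction m with
  | zero => simp
  | succ m ih =>
    rw [Finset.sum_range_succ, Nat.even_add]
    simp only [Nat.even_iff] at ih ⊢
    omega

lemma lex_le_aux {k j1 j2 i1 i2 : ℕ} (hj2 : j2 < k) (h : j1 + k * i1 ≤ j2 + k * i2) :
    i1 ≤ i2 := by
  by_contra hc
  push_neg at hc
  have h2 : k * (i2 + 1) ≤ k * i1 := Nat.mul_le_mul_left _ hc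
  rw [Nat.mul_succ] at h2
  linarith

lemma inv_char {k n i1 j1 i2 j2 : ℕ} (hi1 : i1 < n) (hi2 : i2 < n) (hj1 : j1 < k)
    (hj2 : j2 < k) :
    (i2 + n * j2 < i1 + n * j1 ∧ j1 + k * i1 ≤ j2 + k * i2) ↔ (i1 < i2 ∧ j2 < j1) := by
  constructor
  · rintro ⟨hpos, himg⟩
    have hi : i1 ≤ i2 := lex_le_aux hj2 himg
    have hj : j2 ≤ j1 := lex_le_aux hi1 hpos.le
    have hii : i1 ≠ i2 := by
      rintro rfl
      have hjj : j1 ≤ j2 := by linarith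
      have he : j1 = j2 := le_antisymm hjj hj
      subst he; linarith
    have hjj : j2 ≠ j1 := by
      rintro rfl
      have : i2 < i1 := by linarith
      omega
    exact ⟨lt_of_le_of_ne hi hii, lt_of_le_of_ne hj hjj⟩
  · rintro ⟨h1, h2⟩
    have ha : n * (j2 + 1) ≤ n * j1 := Nat.mul_le_mul_left _ h2
    have hb : k * (i1 + 1) ≤ k * i2 := Nat.mul_le_mul_left _ h1
    rw [Nat.mul_succ] at ha hb
    constructor <;> linarith

lemma card_filter_stdShuffle (k n : ℕ) (hn : 0 < n) :
    ((Equiv.Perm.finPairsLT (k * n)).filter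
        (fun x => stdShuffle k n x.1 ≤ stdShuffle k n x.2)).card
      = ((Equiv.Perm.finPairsLT k) ×ˢ (Equiv.Perm.finPairsLT n)).card := by
  apply Finset.card_nbij'
    (i := fun x => (⟨x.1.divNat, x.2.divNat⟩, ⟨x.2.modNat, x.1.modNat⟩))
    (j := fun p => ⟨finProdFinEquiv (p.1.1, p.2.2), finProdFinEquiv (p.1.2, p.2.1)⟩)
  · rintro ⟨a, b⟩ hx
    obtain ⟨hmem, hle⟩ := Finset.mem_filter.mp hx
    have hlt : (b : ℕ) < (a : ℕ) := Equiv.Perm.mem_finPairsLT.mp hmem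
    have hle' : (a : ℕ) / n + k * ((a : ℕ) % n) ≤ (b : ℕ) / n + k * ((b : ℕ) % n) := by
      simpa [Fin.le_def, stdShuffle_apply_val] using hle
    have hpos : (b : ℕ) % n + n * ((b : ℕ) / n) < (a : ℕ) % n + n * ((a : ℕ) / n) := by
      rw [Nat.mod_add_div, Nat.mod_add_div]; exact hlt
    have hma : (a : ℕ) % n < n := Nat.mod_lt _ hn
    have hmb : (b : ℕ) % n < n := Nat.mod_lt _ hn
    have hda : (a : ℕ) / n < k := Nat.div_lt_iff_lt_mul hn |>.mpr a.isLt
    have hdb : (b : ℕ) / n < k := Nat.div_lt_iff_lt_mul hn |>.mpr b.isLt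
    obtain ⟨hii, hjj⟩ := (inv_char hma hmb hda hdb).mp ⟨hpos, hle'⟩
    exact Finset.mem_product.mpr ⟨Equiv.Perm.mem_finPairsLT.mpr hjj,
      Equiv.Perm.mem_finPairsLT.mpr hii⟩
  · rintro ⟨⟨j1, j2⟩, ⟨i2, i1⟩⟩ hp
    obtain ⟨h1, h2⟩ := Finset.mem_product.mp hp
    have hjj : (j2 : ℕ) < (j1 : ℕ) := Equiv.Perm.mem_finPairsLT.mp h1
    have hii : (i1 : ℕ) < (i2 : ℕ) := Equiv.Perm.mem_finPairsLT.mp h2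
    obtain ⟨hpos, himg⟩ := (inv_char i1.isLt i2.isLt j1.isLt j2.isLt).mpr ⟨hii, hjj⟩
    refine Finset.mem_filter.mpr ⟨Equiv.Perm.mem_finPairsLT.mpr ?_, ?_⟩
    · show (finProdFinEquiv (j2, i2) : Fin (k * n)) < finProdFinEquiv (j1, i1)
      rw [Fin.lt_def, finProd_val, finProd_val]
      exact hpos
    · show stdShuffle k n (finProdFinEquiv (j1, i1)) ≤ stdShuffle k n (finProdFinEquiv (j2, i2))
      rw [Fin.le_def, stdShuffle_apply_val, stdShuffle_apply_val, finProd_val, finProd_val]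
      have e1 : ((i1 : ℕ) + n * (j1 : ℕ)) / n = (j1 : ℕ) := by
        rw [Nat.add_mul_div_left _ _ hn, Nat.div_eq_of_lt i1.isLt, Nat.zero_add]
      have e2 : ((i1 : ℕ) + n * (j1 : ℕ)) % n = (i1 : ℕ) := by
        rw [Nat.add_mul_mod_self_left, Nat.mod_eq_of_lt i1.isLt]
      have e3 : ((i2 : ℕ) + n * (j2 : ℕ)) / n = (j2 : ℕ) := by
        rw [Nat.add_mul_div_left _ _ hn, Nat.div_eq_of_lt i2.isLt, Nat.zero_add]
      have e4 : ((i2 : ℕ) + n * (j2 : ℕ)) % n = (i2 : ℕ) := by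
        rw [Nat.add_mul_mod_self_left, Nat.mod_eq_of_lt i2.isLt]
      rw [e1, e2, e3, e4]
      exact himg
  · rintro ⟨a, b⟩ _
    simp only [finProd_divNat_modNat]
  · rintro ⟨⟨j1, j2⟩, ⟨i2, i1⟩⟩ _
    simp only [divNat_finProd, modNat_finProd]

lemma sign_stdShuffle (k n : ℕ) (hn : 0 < n) :
    Equiv.Perm.sign (stdShuffle k n) =
      (-1) ^ ((∑ i ∈ Finset.range k, i) * (∑ i ∈ Finset.range n, i)) := by
  rw [sign_eq_signAux, signAux_eq_pow, card_filter_stdShuffle k n hn, Finset.card_product,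
    card_finPairsLT, card_finPairsLT]

lemma sign_pilePerm (k n : ℕ) (τ : Equiv.Perm (Fin k)) :
    Equiv.Perm.sign (pilePerm k n τ) = Equiv.Perm.sign τ ^ n := by
  have h1 : pilePerm k n τ =
      (finProdFinEquiv.symm.trans (Equiv.prodCongr τ (Equiv.refl (Fin n)))).trans
        finProdFinEquiv := (Equiv.trans_assoc _ _ _).symm
  have h2 : Equiv.prodCongr τ (Equiv.refl (Fin n)) =
      Equiv.prodCongrLeft (fun _ : Fin n => τ) := by
    apply Equiv.ext
    rintro ⟨a, b⟩
    rfl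
  rw [h1, Equiv.Perm.sign_symm_trans_trans, h2, Equiv.Perm.sign_prodCongrLeft]
  simp

/-- For `k ≥ 2` and `n ≥ 1`, the shuffle group `G_{k,kn}` is contained in the
alternating group on `{0,…,kn-1}` if and only if either `n ≡ 0 (mod 4)`, or
`n ≡ 2 (mod 4)` and `k ≡ 0` or `1 (mod 4)`. -/
theorem shuffleGroup_le_alternating_iff (k n : ℕ) (hk : 2 ≤ k) (hn : 1 ≤ n) :
    shuffleGroup k n ≤ alternatingGroup (Fin (k * n)) ↔
      (n % 4 = 0 ∨ (n % 4 = 2 ∧ (k % 4 = 0 ∨ k % 4 = 1))) := by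
  have hn0 : 0 < n := hn
  rw [shuffleGroup, Subgroup.closure_le, Set.union_subset_iff, Set.singleton_subset_iff,
    Set.range_subset_iff]
  simp only [SetLike.mem_coe, Equiv.Perm.mem_alternatingGroup]
  have hstd : Equiv.Perm.sign (stdShuffle k n) = 1 ↔
      ((k % 4 = 0 ∨ k % 4 = 1) ∨ (n % 4 = 0 ∨ n % 4 = 1)) := by
    rw [sign_stdShuffle k n hn0,
      neg_one_pow_eq_one_iff_even (by decide : (-1 : ℤˣ) ≠ 1), Nat.even_mul,
      even_sum_range_iff, even_sum_range_iff]
  have hpile : (∀ τ : Equiv.Perm (Fin k), Equiv.Perm.sign (pilePerm k n τ) = 1) ↔ Even n := by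
    constructor
    · intro h
      by_contra hodd
      rw [Nat.not_even_iff_odd] at hodd
      have hxy : (⟨0, by omega⟩ : Fin k) ≠ ⟨1, by omega⟩ := by
        simp [Fin.ext_iff]
      have h1 := h (Equiv.swap ⟨0, by omega⟩ ⟨1, by omega⟩)
      rw [sign_pilePerm, Equiv.Perm.sign_swap hxy, hodd.neg_one_pow] at h1
      exact (by decide : ((-1 : ℤˣ) ≠ 1)) h1
    · intro he τ
      rw [sign_pilePerm]
      rcases Int.units_eq_one_or (Equiv.Perm.sign τ) with h | h <;> rw [h]
      · exact one_pow n
      · exact he.neg_one_pow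
  rw [hstd, hpile, Nat.even_iff]
  omega
end
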